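/- arXiv:1611.07853 — 3 statements merged into one kernel-verified Lean document; each statement's English description precedes it below -/
import Mathlib

section
/- Suppose S : U → Y is weak-to-weak continuous, i.e., u_i ⇀ u in U implies S(u_i) ⇀ S(u) in Y. Then the functional E(u) = (1/2)‖S(u) − z‖_Y² + ∫_Ω g(u(x)) dx admits a global minimizer ū ∈ U. -/
open MeasureTheory Set Filter Topology

noncomputable section

abbrev Vec (k : ℕ) := EuclideanSpace ℝ (Fin k)

/-- Weak convergence of a sequence in a real inner product space. -/
def WeakTendsto {X : Type*} [NormedAddCommGroup X] [InnerProductSpace ℝ X]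
    (u : ℕ → X) (l : X) : Prop :=
  ∀ w : X, Tendsto (fun i => (inner ℝ (u i) w : ℝ)) atTop (nhds (inner ℝ l w : ℝ))

/-- Convexity for extended-real-valued functions. -/
def EConvexOn {X : Type*} [AddCommGroup X] [Module ℝ X] (g : X → EReal) : Prop :=
  ∀ x y : X, ∀ a b : ℝ, 0 ≤ a → 0 ≤ b → a + b = 1 →
    g (a • x + b • y) ≤ (a : EReal) * g x + (b : EReal) * g y

/-- Properness for extended-real-valued functions. -/
def EProper {X : Type*} (g : X → EReal) : Prop :=
  (∃ v, g v ≠ ⊤) ∧ ∀ v, g v ≠ ⊥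

open Classical in
/-- The integral functional `u ↦ ∫ g(u x) dμ`, valued in `EReal`. -/
def intG {α : Type*} [MeasurableSpace α] (μ : Measure α) {k : ℕ} (g : Vec k → EReal)
    (u : α → Vec k) : EReal :=
  if (∀ᵐ x ∂μ, g (u x) ≠ ⊤) ∧ Integrable (fun x => (g (u x)).toReal) μ
  then (((∫ x, (g (u x)).toReal ∂μ : ℝ) : EReal)) else ⊤

/-- The Tikhonov-type energy `u ↦ ½‖S u − z‖² + ∫ g(u x) dμ`. -/
def energy {α : Type*} [MeasurableSpace α] (μ : Measure α) {k : ℕ} {Y : Type*}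
    [NormedAddCommGroup Y]
    (S : Lp (Vec k) 2 μ → Y) (z : Y) (g : Vec k → EReal) (u : Lp (Vec k) 2 μ) : EReal :=
  (((1/2 : ℝ) * ‖S u - z‖^2 : ℝ) : EReal) + intG μ g (fun x => u x)

/-!
The direct method of the calculus of variations. Since `g` is lower semicontinuous and finite
only on the compact set `co M`, it is bounded below by some `c` and every control of finite
energy is pointwise bounded, hence bounded in `L²`; a minimizing sequence therefore has a weakly
convergent subsequence (sequential Banach–Alaoglu, transported by the Riesz isomorphism). Both
terms of the energy are sequentially weakly lower semicontinuous: a lower semicontinuous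
quasiconvex functional has closed convex sublevel sets, and these are weakly sequentially closed
by Hahn–Banach. The fidelity term is such a functional composed with the weak-to-weak continuous
`S`; the integral term is one because `∫ g(u) = ∫⁻ (g(u) - c)⁺ + c |Ω|`, which is lower
semicontinuous in `L²` by Fatou's lemma along an a.e. convergent subsequence.
-/

open scoped ENNReal

section WeakTopology

variable {X : Type*} [NormedAddCommGroup X] [InnerProductSpace ℝ X]

theorem WeakTendsto.comp_tendsto {u : ℕ → X} {l : X} (hu : WeakTendsto u l) {φ : ℕ → ℕ}
    (hφ : Tendsto φ atTop atTop) : WeakTendsto (u ∘ φ) l :=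
  fun w => (hu w).comp hφ

theorem exists_weakTendsto_subseq [CompleteSpace X] [TopologicalSpace.SeparableSpace X]
    {u : ℕ → X} {C : ℝ} (hu : ∀ i, ‖u i‖ ≤ C) :
    ∃ l : X, ∃ φ : ℕ → ℕ, StrictMono φ ∧ WeakTendsto (u ∘ φ) l := by
  let v : ℕ → WeakDual ℝ X := fun i =>
    WeakDual.toStrongDual.symm (InnerProductSpace.toDual ℝ X (u i))
  have hv : ∀ i, v i ∈ WeakDual.toStrongDual ⁻¹' Metric.closedBall 0 C := fun i => by
    simpa [v] using hu i
  obtain ⟨f, -, φ, hφ, hlim⟩ := WeakDual.isSeqCompact_closedBall ℝ X 0 C hv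
  refine ⟨(InnerProductSpace.toDual ℝ X).symm (WeakDual.toStrongDual f), φ, hφ, fun w => ?_⟩
  simpa [v, Function.comp_def, real_inner_comm] using
    ((WeakDual.eval_continuous w).tendsto f).comp hlim

theorem WeakTendsto.mem_of_convex_of_isClosed [CompleteSpace X] {u : ℕ → X} {l : X}
    (hu : WeakTendsto u l) {s : Set X} (hs : Convex ℝ s) (hs' : IsClosed s)
    (hus : ∀ᶠ i in atTop, u i ∈ s) : l ∈ s := by
  by_contra hl
  obtain ⟨f, r, hfs, hrl⟩ := geometric_hahn_banach_closed_point hs hs' hl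
  have hf : ∀ x, f x = inner ℝ x ((InnerProductSpace.toDual ℝ X).symm f) := fun x => by
    rw [real_inner_comm, InnerProductSpace.toDual_symm_apply]
  have hlim : Tendsto (fun i => f (u i)) atTop (𝓝 (f l)) := by
    simpa only [hf] using hu ((InnerProductSpace.toDual ℝ X).symm f)
  exact (le_of_tendsto hlim (hus.mono fun i hi => (hfs _ hi).le)).not_gt hrl

def WeakSeqLowerSemicontinuous (F : X → EReal) : Prop :=
  ∀ ⦃u : ℕ → X⦄ ⦃l : X⦄, WeakTendsto u l → F l ≤ liminf (fun i => F (u i)) atTop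

theorem LowerSemicontinuous.weakSeqLowerSemicontinuous [CompleteSpace X] {F : X → EReal}
    (hF : LowerSemicontinuous F) (hFq : QuasiconvexOn ℝ univ F) :
    WeakSeqLowerSemicontinuous F := by
  intro u l hu
  by_contra! h
  obtain ⟨t, hut, htl⟩ := exists_between h
  obtain ⟨φ, hφ, hφt⟩ :=
    extraction_of_frequently_atTop (frequently_lt_of_liminf_lt (by isBoundedDefault) hut)
  have hlt : l ∈ {x | F x ≤ t} :=
    (hu.comp_tendsto hφ.tendsto_atTop).mem_of_convex_of_isClosed (by simpa using hFq t)
      (hF.isClosed_preimage t) (Eventually.of_forall fun i => (hφt i).le)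
  exact htl.not_ge hlt

theorem WeakSeqLowerSemicontinuous.add {F G : X → EReal} (hF : WeakSeqLowerSemicontinuous F)
    (hG : WeakSeqLowerSemicontinuous G) : WeakSeqLowerSemicontinuous (F + G) :=
  fun _ _ hu => (add_le_add (hF hu) (hG hu)).trans EReal.le_liminf_add

theorem WeakSeqLowerSemicontinuous.comp {Y : Type*} [NormedAddCommGroup Y]
    [InnerProductSpace ℝ Y] {F : Y → EReal} (hF : WeakSeqLowerSemicontinuous F) {S : X → Y}
    (hS : ∀ (u : ℕ → X) (l : X), WeakTendsto u l → WeakTendsto (fun i => S (u i)) (S l)) :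
    WeakSeqLowerSemicontinuous (F ∘ S) :=
  fun u l hu => hF (hS u l hu)

theorem WeakSeqLowerSemicontinuous.exists_forall_le [CompleteSpace X]
    [TopologicalSpace.SeparableSpace X] {F : X → EReal} (hF : WeakSeqLowerSemicontinuous F)
    {C : ℝ} (hC : ∀ u, F u ≠ ⊤ → ‖u‖ ≤ C) : ∃ ubar, ∀ u, F ubar ≤ F u := by
  set D := F '' {u | F u ≠ ⊤}
  rcases D.eq_empty_or_nonempty with hD | hD
  · refine ⟨0, fun u => ?_⟩
    by_contra hu
    exact (image_eq_empty.1 hD).subset (ne_top_of_lt (not_le.1 hu))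
  obtain ⟨y, -, hy, hyD⟩ := exists_seq_tendsto_sInf hD (OrderBot.bddBelow D)
  choose v hvD hv using hyD
  obtain ⟨l, φ, hφ, hl⟩ := exists_weakTendsto_subseq fun i => hC _ (hvD i)
  refine ⟨l, fun u => ?_⟩
  calc F l ≤ liminf (fun i => F (v (φ i))) atTop := hF hl
    _ = sInf D := by simp only [hv]; exact (hy.comp hφ.tendsto_atTop).liminf_eq
    _ ≤ F u := by
      by_cases hu : F u = ⊤
      · simp [hu]
      · exact sInf_le ⟨u, hu, rfl⟩

end WeakTopology

theorem weakSeqLowerSemicontinuous_half_norm_sub_sq {Y : Type*} [NormedAddCommGroup Y]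
    [InnerProductSpace ℝ Y] [CompleteSpace Y] (z : Y) :
    WeakSeqLowerSemicontinuous fun y : Y => (((1/2 : ℝ) * ‖y - z‖^2 : ℝ) : EReal) := by
  have hconv : ConvexOn ℝ univ fun y : Y => (1/2 : ℝ) * ‖y - z‖ ^ 2 := by
    simpa [dist_eq_norm, smul_eq_mul] using
      ((convexOn_univ_dist z).pow (fun _ _ => dist_nonneg) 2).smul (by norm_num : (0:ℝ) ≤ 1/2)
  refine LowerSemicontinuous.weakSeqLowerSemicontinuous ?_
    (hconv.quasiconvexOn.monotone_comp (g := Real.toEReal) EReal.coe_strictMono.monotone)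
  exact (continuous_coe_real_ereal.comp (by fun_prop)).lowerSemicontinuous

theorem exists_forall_coe_le_of_isCompact {α : Type*} [TopologicalSpace α] {g : α → EReal}
    (hg : LowerSemicontinuous g) (hbot : ∀ v, g v ≠ ⊥) {K : Set α} (hK : IsCompact K)
    (hout : ∀ v ∉ K, g v = ⊤) : ∃ c : ℝ, ∀ v, (c : EReal) ≤ g v := by
  rcases K.eq_empty_or_nonempty with rfl | hne
  · exact ⟨0, fun v => by simp [hout v (notMem_empty v)]⟩
  obtain ⟨a, -, ha⟩ := (hg.lowerSemicontinuousOn K).exists_isMinOn hne hK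
  refine ⟨(g a).toReal, fun v => (EReal.coe_toReal_le (hbot a)).trans ?_⟩
  by_cases hv : v ∈ K
  · exact ha hv
  · simp [hout v hv]

theorem EReal.toENNReal_sub_coe {x : EReal} {c : ℝ} (hcx : (c : EReal) ≤ x) (hx : x ≠ ⊤) :
    (x - c).toENNReal = ENNReal.ofReal (x.toReal - c) := by
  rw [← EReal.coe_toReal hx ((EReal.bot_lt_coe c).trans_le hcx).ne', ← EReal.coe_sub,
    EReal.real_coe_toENNReal, EReal.toReal_coe]

theorem MeasureTheory.Lp.lowerSemicontinuous_lintegral_comp {α E : Type*} [MeasurableSpace α]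
    {μ : Measure α} [NormedAddCommGroup E] [MeasurableSpace E] [BorelSpace E] {p : ℝ≥0∞}
    [Fact (1 ≤ p)] {q : E → ℝ≥0∞} (hq : LowerSemicontinuous q) :
    LowerSemicontinuous fun u : Lp E p μ => ∫⁻ x, q (u x) ∂μ := by
  refine lowerSemicontinuous_iff_isClosed_preimage.2 fun s =>
    IsSeqClosed.isClosed fun u l hu hul => ?_
  obtain ⟨ψ, -, hae⟩ := (tendstoInMeasure_of_tendsto_Lp hul).exists_seq_tendsto_ae
  calc ∫⁻ x, q (l x) ∂μ ≤ ∫⁻ x, liminf (fun i => q (u (ψ i) x)) atTop ∂μ :=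
        lintegral_mono_ae <| hae.mono fun x hx =>
          (hq.le_liminf _).trans (liminf_le_liminf_of_le hx)
    _ ≤ liminf (fun i => ∫⁻ x, q (u (ψ i) x) ∂μ) atTop :=
        lintegral_liminf_le' fun i => hq.measurable.comp_aemeasurable
          (Lp.aestronglyMeasurable _).aemeasurable
    _ ≤ s := liminf_le_of_frequently_le' (Frequently.of_forall fun i => hu (ψ i))

section IntegralFunctional

variable {α : Type*} [MeasurableSpace α] {μ : Measure α} {k : ℕ} {g : Vec k → EReal} {c : ℝ}

theorem intG_eq_lintegral_add [IsFiniteMeasure μ] (hc : ∀ v, (c : EReal) ≤ g v)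
    (hg : Measurable g) {u : α → Vec k} (hu : AEMeasurable u μ) :
    intG μ g u = ((∫⁻ x, (g (u x) - c).toENNReal ∂μ : ℝ≥0∞) : EReal)
      + ((c * μ.real univ : ℝ) : EReal) := by
  have hgu : AEMeasurable (fun x => g (u x)) μ := hg.comp_aemeasurable hu
  have hnn : ∀ x, g (u x) ≠ ⊤ → 0 ≤ (g (u x)).toReal - c := fun x hx => by
    have := EReal.toReal_le_toReal (hc (u x)) (EReal.coe_ne_bot c) hx
    rw [EReal.toReal_coe] at this
    linarith
  have hq : ∀ x, g (u x) ≠ ⊤ → (g (u x) - c).toENNReal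
      = ENNReal.ofReal ((g (u x)).toReal - c) :=
    fun x => EReal.toENNReal_sub_coe (hc _)
  unfold intG
  split_ifs with h
  · obtain ⟨hfin, hint⟩ := h
    have hnn' : 0 ≤ᵐ[μ] fun x => (g (u x)).toReal - c := hfin.mono hnn
    have hint' : Integrable (fun x => (g (u x)).toReal - c) μ := hint.sub (integrable_const c)
    rw [lintegral_congr_ae (hfin.mono hq), ← ofReal_integral_eq_lintegral_ofReal hint' hnn',
      EReal.coe_ennreal_ofReal, max_eq_left (integral_nonneg_of_ae hnn'),
      integral_sub hint (integrable_const c), integral_const, smul_eq_mul, ← EReal.coe_add]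
    ring_nf
  · suffices hL : ∫⁻ x, (g (u x) - c).toENNReal ∂μ = ⊤ by
      rw [hL, EReal.coe_ennreal_top, EReal.top_add_coe]
    by_contra hL
    have hfin : ∀ᵐ x ∂μ, g (u x) ≠ ⊤ :=
      (ae_lt_top' (by fun_prop) hL).mono fun x hx hx' => by simp [hx'] at hx
    have hint : Integrable (fun x => (g (u x)).toReal - c) μ := by
      refine (lintegral_ofReal_ne_top_iff_integrable ?_ (hfin.mono hnn)).1 ?_
      · exact ((measurable_ereal_toReal.comp_aemeasurable hgu).sub_const c).aestronglyMeasurable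
      · rwa [← lintegral_congr_ae (hfin.mono hq)]
    exact h ⟨hfin, (hint.add (integrable_const c)).congr (Eventually.of_forall fun x => by simp)⟩

theorem EConvexOn.toENNReal_sub_le (hconv : EConvexOn g) (hc : ∀ v, (c : EReal) ≤ g v)
    {x y : Vec k} (hx : g x ≠ ⊤) (hy : g y ≠ ⊤) {a b : ℝ} (ha : 0 ≤ a) (hb : 0 ≤ b)
    (hab : a + b = 1) :
    (g (a • x + b • y) - c).toENNReal
      ≤ ENNReal.ofReal a * (g x - c).toENNReal + ENNReal.ofReal b * (g y - c).toENNReal := by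
  have hbot : ∀ v, g v ≠ ⊥ := fun v => ((EReal.bot_lt_coe c).trans_le (hc v)).ne'
  obtain ⟨X, hX⟩ : ∃ X : ℝ, g x = X := ⟨_, (EReal.coe_toReal hx (hbot x)).symm⟩
  obtain ⟨Y, hY⟩ : ∃ Y : ℝ, g y = Y := ⟨_, (EReal.coe_toReal hy (hbot y)).symm⟩
  have hXc : c ≤ X := by exact_mod_cast hX ▸ hc x
  have hYc : c ≤ Y := by exact_mod_cast hY ▸ hc y
  have hle : g (a • x + b • y) - c ≤ ((a * (X - c) + b * (Y - c) : ℝ) : EReal) :=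
    calc g (a • x + b • y) - c ≤ a * g x + b * g y - c :=
          EReal.sub_le_sub (hconv x y a b ha hb hab) le_rfl
      _ = ((a * (X - c) + b * (Y - c) : ℝ) : EReal) := by
          rw [hX, hY]; norm_cast; linear_combination c * hab
  calc (g (a • x + b • y) - c).toENNReal ≤ ENNReal.ofReal (a * (X - c) + b * (Y - c)) :=
        EReal.toENNReal_le_toENNReal hle
    _ = _ := by
        rw [hX, hY, ← EReal.coe_sub, ← EReal.coe_sub, EReal.real_coe_toENNReal,
          EReal.real_coe_toENNReal, ENNReal.ofReal_add (mul_nonneg ha (sub_nonneg.2 hXc))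
          (mul_nonneg hb (sub_nonneg.2 hYc)), ENNReal.ofReal_mul ha, ENNReal.ofReal_mul hb]

theorem quasiconvexOn_lintegral_toENNReal_sub {p : ℝ≥0∞} (hconv : EConvexOn g)
    (hc : ∀ v, (c : EReal) ≤ g v) (hg : Measurable g) :
    QuasiconvexOn ℝ univ fun u : Lp (Vec k) p μ => ∫⁻ x, (g (u x) - c).toENNReal ∂μ := by
  refine quasiconvexOn_iff_le_max.2 ⟨convex_univ, fun u _ v _ a b ha hb hab => ?_⟩
  set L := fun u : Lp (Vec k) p μ => ∫⁻ x, (g (u x) - c).toENNReal ∂μ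
  have hmeas : ∀ w : Lp (Vec k) p μ, AEMeasurable (fun x => (g (w x) - c).toENNReal) μ :=
    fun w => by have := (Lp.aestronglyMeasurable w).aemeasurable; fun_prop
  rcases eq_or_ne (max (L u) (L v)) ⊤ with hM | hM
  · exact hM ▸ le_top
  have hfin : ∀ w, L w ≤ max (L u) (L v) → ∀ᵐ x ∂μ, g (w x) ≠ ⊤ := fun w hw =>
    (ae_lt_top' (hmeas w) (ne_top_of_le_ne_top hM hw)).mono fun x hx hx' => by simp [hx'] at hx
  calc L (a • u + b • v)
      ≤ ∫⁻ x, (ENNReal.ofReal a * (g (u x) - c).toENNReal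
          + ENNReal.ofReal b * (g (v x) - c).toENNReal) ∂μ := by
        refine lintegral_mono_ae ?_
        filter_upwards [Lp.coeFn_add (a • u) (b • v), Lp.coeFn_smul a u, Lp.coeFn_smul b v,
          hfin u (le_max_left _ _), hfin v (le_max_right _ _)] with x hw hu hv hux hvx
        rw [hw, Pi.add_apply, hu, hv]
        exact hconv.toENNReal_sub_le hc hux hvx ha hb hab
    _ = ENNReal.ofReal a * L u + ENNReal.ofReal b * L v := by
        rw [lintegral_add_left' ((hmeas u).const_mul _),
          lintegral_const_mul' _ _ ENNReal.ofReal_ne_top,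
          lintegral_const_mul' _ _ ENNReal.ofReal_ne_top]
    _ ≤ ENNReal.ofReal a * max (L u) (L v) + ENNReal.ofReal b * max (L u) (L v) := by
        gcongr
        exacts [le_max_left _ _, le_max_right _ _]
    _ = max (L u) (L v) := by
        rw [← add_mul, ← ENNReal.ofReal_add ha hb, hab, ENNReal.ofReal_one, one_mul]

theorem weakSeqLowerSemicontinuous_intG [IsFiniteMeasure μ] (hconv : EConvexOn g)
    (hlsc : LowerSemicontinuous g) (hc : ∀ v, (c : EReal) ≤ g v) :
    WeakSeqLowerSemicontinuous fun u : Lp (Vec k) 2 μ => intG μ g u := by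
  have hq : LowerSemicontinuous fun v => (g v - c).toENNReal := by
    refine EReal.continuous_toENNReal.comp_lowerSemicontinuous ?_
      fun _ _ => EReal.toENNReal_le_toENNReal
    simp only [sub_eq_add_neg]
    exact hlsc.add' lowerSemicontinuous_const fun v =>
      EReal.continuousAt_add (Or.inr (by simp)) (Or.inr (by simp))
  have heq : (fun u : Lp (Vec k) 2 μ => intG μ g u) = fun u =>
      ((∫⁻ x, (g (u x) - c).toENNReal ∂μ : ℝ≥0∞) : EReal) + ((c * μ.real univ : ℝ) : EReal) :=
    funext fun u =>
      intG_eq_lintegral_add hc hlsc.measurable (Lp.aestronglyMeasurable u).aemeasurable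
  rw [heq]
  refine LowerSemicontinuous.weakSeqLowerSemicontinuous ?_ ?_
  · exact (continuous_coe_ennreal_ereal.comp_lowerSemicontinuous
      (Lp.lowerSemicontinuous_lintegral_comp hq) EReal.coe_ennreal_strictMono.monotone).add'
      lowerSemicontinuous_const fun _ =>
        EReal.continuousAt_add (Or.inr (EReal.coe_ne_bot _)) (Or.inr (EReal.coe_ne_top _))
  · exact (quasiconvexOn_lintegral_toENNReal_sub hconv hc hlsc.measurable).monotone_comp
      (g := fun s : ℝ≥0∞ => (s : EReal) + ((c * μ.real univ : ℝ) : EReal))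
      fun s t hst => add_le_add (EReal.coe_ennreal_le_coe_ennreal_iff.2 hst) le_rfl

theorem norm_le_of_intG_ne_top [IsFiniteMeasure μ] {p : ℝ≥0∞} [Fact (1 ≤ p)] {R : ℝ}
    (hR0 : 0 ≤ R) (hR : ∀ v, g v ≠ ⊤ → ‖v‖ ≤ R) {u : Lp (Vec k) p μ} (hu : intG μ g u ≠ ⊤) :
    ‖u‖ ≤ measureUnivNNReal μ ^ p.toReal⁻¹ * R := by
  have hfin : ∀ᵐ x ∂μ, g (u x) ≠ ⊤ := by
    unfold intG at hu
    split_ifs at hu with h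
    exacts [h.1, absurd rfl hu]
  exact Lp.norm_le_of_ae_bound hR0 (hfin.mono fun x hx => hR _ hx)

end IntegralFunctional

theorem existence_of_minimizers_general
    {n m : ℕ}
    (Ω : Set (Vec n)) (hΩbdd : Bornology.IsBounded Ω)
    {Y : Type*} [NormedAddCommGroup Y] [InnerProductSpace ℝ Y] [CompleteSpace Y] (z : Y)
    (M : Finset (Vec m)) (g : Vec m → EReal)
    (hproper : EProper g) (hconv : EConvexOn g) (hlsc : LowerSemicontinuous g)
    (hdom : {v | g v ≠ ⊤} = convexHull ℝ (M : Set (Vec m)))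
    (S : Lp (Vec m) 2 (volume.restrict Ω) → Y)
    (hS : ∀ (u : ℕ → Lp (Vec m) 2 (volume.restrict Ω)) (l : Lp (Vec m) 2 (volume.restrict Ω)),
      WeakTendsto u l → WeakTendsto (fun i => S (u i)) (S l)) :
    ∃ ubar : Lp (Vec m) 2 (volume.restrict Ω),
      ∀ u : Lp (Vec m) 2 (volume.restrict Ω),
        energy (volume.restrict Ω) S z g ubar ≤ energy (volume.restrict Ω) S z g u := by
  have : IsFiniteMeasure (volume.restrict Ω) :=
    isFiniteMeasure_restrict.2 hΩbdd.measure_lt_top.ne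
  have hK : IsCompact (convexHull ℝ (M : Set (Vec m))) :=
    M.finite_toSet.isCompact_convexHull (𝕜 := ℝ)
  have : Fact ((2 : ℝ≥0∞) ≠ ⊤) := ⟨ENNReal.ofNat_ne_top⟩
  obtain ⟨c, hc⟩ := exists_forall_coe_le_of_isCompact hlsc hproper.2 hK fun v hv => by
    by_contra h
    exact hv (hdom ▸ h)
  obtain ⟨R, hR0, hR⟩ := hK.isBounded.exists_pos_norm_le
  have hE : WeakSeqLowerSemicontinuous (energy (volume.restrict Ω) S z g) :=
    ((weakSeqLowerSemicontinuous_half_norm_sub_sq z).comp hS).add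
      (weakSeqLowerSemicontinuous_intG hconv hlsc hc)
  refine hE.exists_forall_le fun u hu =>
    norm_le_of_intG_ne_top hR0.le (fun v hv => hR v (hdom ▸ hv)) fun h => hu ?_
  rw [energy, h, EReal.coe_add_top]

/-- existence of minimizers: if the control-to-state operator `S` is
weak-to-weak (sequentially) continuous, then the energy
`E(u) = ½‖S u − z‖² + ∫_Ω g(u(x)) dx` admits a global minimizer on `U = L²(Ω;ℝᵐ)`. -/
theorem existence_of_minimizers
    {n m : ℕ} (hm : 2 ≤ m)
    (Ω : Set (Vec n)) (hΩopen : IsOpen Ω) (hΩbdd : Bornology.IsBounded Ω)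
    {Y : Type*} [NormedAddCommGroup Y] [InnerProductSpace ℝ Y] [CompleteSpace Y] (z : Y)
    (M : Finset (Vec m)) (g : Vec m → EReal)
    (hproper : EProper g) (hconv : EConvexOn g) (hlsc : LowerSemicontinuous g)
    (hdom : {v | g v ≠ ⊤} = convexHull ℝ (M : Set (Vec m)))
    (S : Lp (Vec m) 2 (volume.restrict Ω) → Y)
    (hS : ∀ (u : ℕ → Lp (Vec m) 2 (volume.restrict Ω)) (l : Lp (Vec m) 2 (volume.restrict Ω)),
      WeakTendsto u l → WeakTendsto (fun i => S (u i)) (S l)) :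
    ∃ ubar : Lp (Vec m) 2 (volume.restrict Ω),
      ∀ u : Lp (Vec m) 2 (volume.restrict Ω),
        energy (volume.restrict Ω) S z g ubar ≤ energy (volume.restrict Ω) S z g u :=
  existence_of_minimizers_general Ω hΩbdd z M g hproper hconv hlsc hdom S hS
end
end

section
/- Under the hypotheses of the dual stability result (z_n → z in Y; S weak-to-weak continuous, Fréchet differentiable, compact; adjoint convergence in V* with V* ↪ L^∞(Ω;ℝᵐ)), let Q ⊂ ℝᵐ be the set on which ∂g* is single-valued, and for P ⊂ ℝᵐ set Ω_P = {x ∈ Ω : p̄(x) ∈ P}. Let u_n be minimizers of E^{z_n} with dual variables p_n → p̄ in V*, and ū the corresponding limit minimizer of E^z. Then: (i) for any compact P ⊂⊂ Q and all n large enough, u_n(x) = ū(x) ∈ M for a.e. x ∈ Ω_P; (ii) u_n restricted to Ω_Q converges strongly in L²(Ω_Q;ℝᵐ) to ū restricted to Ω_Q, and ū(x) ∈ M for a.e. x ∈ Ω_Q. -/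
/-!
Because `dom g = co M` is compact, the supremum defining `g*` is attained, so `g*` is finite and
Lipschitz and its subgradients are uniformly bounded. By Rademacher's theorem `g*` is
differentiable on a dense set, where `∂g*` is a singleton and therefore lies in the finite set `M`;
together with the upper semicontinuity of `∂g*` this makes `∂g*` locally constant on `Q`, which is
thus open. As `p_n → p̄` in `L^∞`, `p_n(x)` eventually lies in the neighbourhood of `p̄(x)` where
`∂g*` is constant, uniformly for `p̄(x)` in a compact `P ⊆ Q` (Lebesgue number lemma), and there
`u_n(x) = ū(x)`. Strong convergence on `Ω_Q` then follows by dominated convergence.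
-/

open MeasureTheory Set Filter Topology

noncomputable section

/-- The convex subdifferential of an extended-real-valued function on a real inner
product space. -/
def ESubdiff {X : Type*} [NormedAddCommGroup X] [InnerProductSpace ℝ X]
    (f : X → EReal) (u : X) : Set X :=
  {p | ∀ v, f u + ((inner ℝ p (v - u) : ℝ) : EReal) ≤ f v}

/-- The Fenchel (Legendre–Fenchel) conjugate of an extended-real-valued function on a
real inner product space. -/
def EConj {X : Type*} [NormedAddCommGroup X] [InnerProductSpace ℝ X]
    (f : X → EReal) (p : X) : EReal :=
  ⨆ v, ((inner ℝ p v : ℝ) : EReal) - f v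

open scoped NNReal RealInnerProductSpace

section RealSubdiff

variable {E : Type*} [NormedAddCommGroup E] [InnerProductSpace ℝ E] {f : E → ℝ} {x w : E}

theorem mem_eSubdiff_coe_iff :
    w ∈ ESubdiff (fun y => (f y : EReal)) x ↔ ∀ y, f x + ⟪w, y - x⟫ ≤ f y := by
  simp only [ESubdiff, mem_ofPred_eq, ← EReal.coe_add, EReal.coe_le_coe_iff]

theorem norm_le_of_mem_eSubdiff {K : ℝ≥0} (hf : LipschitzWith K f)
    (hw : w ∈ ESubdiff (fun y => (f y : EReal)) x) : ‖w‖ ≤ K := by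
  have hsub := mem_eSubdiff_coe_iff.mp hw (x + w)
  have hlip : f (x + w) ≤ f x + K * ‖w‖ := by
    simpa [dist_eq_norm] using hf.le_add_mul (x + w) x
  rw [add_sub_cancel_left, real_inner_self_eq_norm_sq] at hsub
  nlinarith [norm_nonneg w]

theorem innerSL_eq_of_mem_eSubdiff {L : E →L[ℝ] ℝ} (hL : HasFDerivAt f L x)
    (hw : w ∈ ESubdiff (fun y => (f y : EReal)) x) : innerSL ℝ w = L := by
  have hmin : IsLocalMin (fun y => f y - ⟪w, y⟫) x :=
    Eventually.of_forall fun y => by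
      have := mem_eSubdiff_coe_iff.mp hw y
      rw [inner_sub_right] at this
      linarith
  have := hmin.hasFDerivAt_eq_zero (hL.sub (innerSL ℝ w).hasFDerivAt)
  exact (sub_eq_zero.mp this).symm

theorem eSubdiff_subsingleton_of_differentiableAt (hf : DifferentiableAt ℝ f x) :
    (ESubdiff (fun y => (f y : EReal)) x).Subsingleton := fun w hw w' hw' =>
  ext_inner_right ℝ fun d => by
    rw [← innerSL_apply_apply, ← innerSL_apply_apply ℝ w',
      innerSL_eq_of_mem_eSubdiff hf.hasFDerivAt hw, innerSL_eq_of_mem_eSubdiff hf.hasFDerivAt hw']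

theorem isClosed_setOf_mem_eSubdiff (hf : Continuous f) :
    IsClosed {p : E × E | p.2 ∈ ESubdiff (fun y => (f y : EReal)) p.1} := by
  simp only [mem_eSubdiff_coe_iff, ofPred_forall]
  exact isClosed_iInter fun y => isClosed_le (by fun_prop) continuous_const

theorem eventually_eSubdiff_subset [ProperSpace E] {K : ℝ≥0} (hf : LipschitzWith K f)
    {U : Set E} (hU : IsOpen U) (hxU : ESubdiff (fun y => (f y : EReal)) x ⊆ U) :
    ∀ᶠ y in 𝓝 x, ESubdiff (fun y => (f y : EReal)) y ⊆ U := by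
  have hgraph := (isClosed_setOf_mem_eSubdiff hf.continuous).isOpen_compl
  have hC : IsCompact (Metric.closedBall (0 : E) K \ U) :=
    (isCompact_closedBall 0 K).diff hU
  have : ∀ᶠ y in 𝓝 x, ∀ w ∈ Metric.closedBall (0 : E) K \ U,
      w ∉ ESubdiff (fun y => (f y : EReal)) y :=
    hC.eventually_forall_of_forall_eventually fun w hw =>
      hgraph.mem_nhds fun hxw => hw.2 (hxU hxw)
  filter_upwards [this] with y hy w hw
  by_contra hwU
  exact hy w ⟨mem_closedBall_zero_iff.mpr (norm_le_of_mem_eSubdiff hf hw), hwU⟩ hw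

theorem eSubdiff_eq_singleton_of_forall_mem {B : Set E} (hB : IsOpen B) {v : E}
    (hv : ∀ y ∈ B, v ∈ ESubdiff (fun y => (f y : EReal)) y) :
    ∀ y ∈ B, ESubdiff (fun y => (f y : EReal)) y = {v} := by
  intro x hx
  have haffine : f =ᶠ[𝓝 x] fun y => f x + innerSL ℝ v y - innerSL ℝ v x :=
    eventually_of_mem (hB.mem_nhds hx) fun y hy => by
      have h1 := mem_eSubdiff_coe_iff.mp (hv x hx) y
      have h2 := mem_eSubdiff_coe_iff.mp (hv y hy) x
      simp only [inner_sub_right] at h1 h2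
      simp only [innerSL_apply_apply]
      linarith
  have hderiv : HasFDerivAt f (innerSL ℝ v) x :=
    (((innerSL ℝ v).hasFDerivAt.const_add (f x)).sub_const _).congr_of_eventuallyEq haffine
  refine (eq_singleton_iff_unique_mem).mpr ⟨hv x hx, fun w hw => ?_⟩
  exact ext_inner_right ℝ fun d => by
    rw [← innerSL_apply_apply, ← innerSL_apply_apply ℝ v, innerSL_eq_of_mem_eSubdiff hderiv hw]

end RealSubdiff

theorem LipschitzWith.dense_differentiableAt {E : Type*} [NormedAddCommGroup E]
    [NormedSpace ℝ E] [FiniteDimensional ℝ E] {f : E → ℝ} {K : ℝ≥0} (hf : LipschitzWith K f) :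
    Dense {x | DifferentiableAt ℝ f x} :=
  let _ : MeasurableSpace E := borel E
  have _ : BorelSpace E := ⟨rfl⟩
  Measure.dense_of_ae (hf.ae_differentiableAt (μ := (Module.finBasis ℝ E).addHaar))

section LocallyConstant

variable {E : Type*} [NormedAddCommGroup E] [InnerProductSpace ℝ E] [FiniteDimensional ℝ E]
  {f : E → ℝ} {K : ℝ≥0}

/-- At nearby differentiability points the unique subgradient is close to `v` and lies in `M`,
so it is `v`; by density of these points and closedness of `{y | v ∈ ∂f y}`, `v` is a subgradient
on a whole neighbourhood of `x`, where `f` is therefore affine. -/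
theorem eventually_eSubdiff_eq_singleton (hf : LipschitzWith K f)
    (hne : ∀ y, (ESubdiff (fun y => (f y : EReal)) y).Nonempty) {M : Set E} (hM : M.Finite)
    (hsingle : ∀ y w, ESubdiff (fun y => (f y : EReal)) y = {w} → w ∈ M) {x v : E}
    (hv : ESubdiff (fun y => (f y : EReal)) x = {v}) :
    ∀ᶠ y in 𝓝 x, ESubdiff (fun y => (f y : EReal)) y = {v} := by
  have hU : IsOpen (M \ {v})ᶜ := hM.sdiff.isClosed.isOpen_compl
  obtain ⟨B, hBU, hBopen, hxB⟩ := eventually_nhds_iff.mp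
    (eventually_eSubdiff_subset hf hU (by rw [hv]; simp))
  have hdiff :
      B ∩ {y | DifferentiableAt ℝ f y} ⊆ {y | v ∈ ESubdiff (fun y => (f y : EReal)) y} := by
    rintro y ⟨hyB, hy⟩
    obtain ⟨w, hw⟩ := hne y
    have hsing := (eSubdiff_subsingleton_of_differentiableAt hy).eq_singleton_of_mem hw
    have hwv : w = v := by
      by_contra hwv
      exact hBU y hyB hw ⟨hsingle y w hsing, hwv⟩
    exact hwv ▸ hw
  have hclosed : IsClosed {y | v ∈ ESubdiff (fun y => (f y : EReal)) y} :=
    (isClosed_setOf_mem_eSubdiff hf.continuous).preimage (f := fun y => (y, v)) (by fun_prop)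
  have hB : ∀ y ∈ B, v ∈ ESubdiff (fun y => (f y : EReal)) y := fun y hy =>
    closure_minimal hdiff hclosed (hf.dense_differentiableAt.open_subset_closure_inter hBopen hy)
  exact eventually_of_mem (hBopen.mem_nhds hxB) (eSubdiff_eq_singleton_of_forall_mem hBopen hB)

end LocallyConstant

theorem IsCompact.exists_pos_forall_dist_lt_eq {X β : Type*} [PseudoMetricSpace X] {φ : X → β}
    {P : Set X} (hP : IsCompact P) (hφ : ∀ p ∈ P, ∀ᶠ q in 𝓝 p, φ q = φ p) :
    ∃ δ > 0, ∀ p ∈ P, ∀ q, dist q p < δ → φ q = φ p := by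
  obtain ⟨δ, hδ, hball⟩ := lebesgue_number_lemma_of_metric hP
    (c := fun p => interior {q | φ q = φ p}) (fun _ => isOpen_interior)
    fun p hp => mem_iUnion.mpr ⟨p, mem_interior_iff_mem_nhds.mpr (hφ p hp)⟩
  refine ⟨δ, hδ, fun p hp q hq => ?_⟩
  obtain ⟨c, hc⟩ := hball p hp
  have hq' : φ q = φ c := interior_subset (s := {q | φ q = φ c}) (hc hq)
  have hp' : φ p = φ c := interior_subset (s := {q | φ q = φ c}) (hc (Metric.mem_ball_self hδ))
  rw [hq', hp']

section Conjugate

variable {E : Type*} [NormedAddCommGroup E] [InnerProductSpace ℝ E] {g : E → EReal}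

/-- The supremum defining `g*` is attained, because `v ↦ g v - ⟪q, v⟫` is lower semicontinuous
and equals `⊤` off the compact set `dom g`. -/
theorem exists_eConj_eq_inner_sub (hg : EProper g) (hlsc : LowerSemicontinuous g)
    (hdom : IsCompact {v | g v ≠ ⊤}) (q : E) :
    ∃ v, ∃ r : ℝ, g v = r ∧ EConj g q = ((⟪q, v⟫ - r : ℝ) : EReal) := by
  have hφ : LowerSemicontinuous fun v => g v + ((-⟪q, v⟫ : ℝ) : EReal) :=
    hlsc.add' (continuous_coe_real_ereal.comp (by fun_prop)).lowerSemicontinuous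
      fun v => EReal.continuousAt_add (.inr (EReal.coe_ne_bot _)) (.inr (EReal.coe_ne_top _))
  obtain ⟨v, hv, hmin⟩ :=
    LowerSemicontinuousOn.exists_isMinOn hg.1 hdom (hφ.lowerSemicontinuousOn _)
  obtain ⟨r, hr⟩ : ∃ r : ℝ, g v = r := ⟨_, (EReal.coe_toReal hv (hg.2 v)).symm⟩
  refine ⟨v, r, hr, le_antisymm (iSup_le fun w => ?_) (le_iSup_of_le v ?_)⟩
  · by_cases hw : g w = ⊤
    · simp [hw]
    obtain ⟨s, hs⟩ : ∃ s : ℝ, g w = s := ⟨_, (EReal.coe_toReal hw (hg.2 w)).symm⟩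
    have := hmin hw
    simp only [mem_ofPred_eq, hr, hs, ← EReal.coe_add, EReal.coe_le_coe_iff] at this
    rw [hs, ← EReal.coe_sub, EReal.coe_le_coe_iff]
    linarith
  · rw [hr, ← EReal.coe_sub]

variable (hg : EProper g) (hlsc : LowerSemicontinuous g) (hdom : IsCompact {v | g v ≠ ⊤})
include hg hlsc hdom

theorem eConj_eq_coe_toReal : EConj g = fun q => ((EConj g q).toReal : EReal) := by
  funext q
  obtain ⟨v, r, -, h⟩ := exists_eConj_eq_inner_sub hg hlsc hdom q
  rw [h, EReal.toReal_coe]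

theorem inner_sub_le_eConj_toReal {q v : E} {r : ℝ} (hr : g v = r) :
    ⟪q, v⟫ - r ≤ (EConj g q).toReal := by
  have : ((⟪q, v⟫ : ℝ) : EReal) - g v ≤ EConj g q :=
    le_iSup (fun v => ((⟪q, v⟫ : ℝ) : EReal) - g v) v
  rwa [hr, ← EReal.coe_sub, eConj_eq_coe_toReal hg hlsc hdom, EReal.coe_le_coe_iff] at this

theorem exists_lipschitzWith_eConj_toReal :
    ∃ K, LipschitzWith K fun q => (EConj g q).toReal := by
  obtain ⟨R, hR⟩ := hdom.isBounded.exists_norm_le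
  refine ⟨R.toNNReal, LipschitzWith.of_le_add_mul' R fun q q' => ?_⟩
  obtain ⟨v, r, hr, hq⟩ := exists_eConj_eq_inner_sub hg hlsc hdom q
  have hv : ‖v‖ ≤ R := hR v (by simp [hr])
  have hle := inner_sub_le_eConj_toReal hg hlsc hdom (q := q') hr
  have hinner : ⟪q - q', v⟫ ≤ R * dist q q' := by
    rw [dist_eq_norm, mul_comm]
    exact (real_inner_le_norm _ _).trans (mul_le_mul_of_nonneg_left hv (norm_nonneg _))
  rw [hq, EReal.toReal_coe]
  linarith [inner_sub_left (𝕜 := ℝ) q q' v]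

theorem eSubdiff_eConj_nonempty (q : E) : (ESubdiff (EConj g) q).Nonempty := by
  obtain ⟨v, r, hr, hq⟩ := exists_eConj_eq_inner_sub hg hlsc hdom q
  refine ⟨v, ?_⟩
  rw [eConj_eq_coe_toReal hg hlsc hdom, mem_eSubdiff_coe_iff]
  intro y
  have := inner_sub_le_eConj_toReal hg hlsc hdom (q := y) hr
  rw [hq, EReal.toReal_coe, inner_sub_right]
  linarith [real_inner_comm y v, real_inner_comm q v]

theorem exists_norm_le_of_mem_eSubdiff_eConj :
    ∃ R : ℝ, ∀ q w, w ∈ ESubdiff (EConj g) q → ‖w‖ ≤ R := by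
  obtain ⟨K, hK⟩ := exists_lipschitzWith_eConj_toReal hg hlsc hdom
  refine ⟨K, fun q w hw => norm_le_of_mem_eSubdiff (x := q) hK ?_⟩
  rwa [eConj_eq_coe_toReal hg hlsc hdom] at hw

theorem eventually_eSubdiff_eConj_eq_singleton [FiniteDimensional ℝ E] {M : Set E}
    (hM : M.Finite) (hsingle : ∀ q w, ESubdiff (EConj g) q = {w} → w ∈ M) {q v : E}
    (hv : ESubdiff (EConj g) q = {v}) : ∀ᶠ q' in 𝓝 q, ESubdiff (EConj g) q' = {v} := by
  obtain ⟨K, hK⟩ := exists_lipschitzWith_eConj_toReal hg hlsc hdom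
  have hne := eSubdiff_eConj_nonempty hg hlsc hdom
  rw [eConj_eq_coe_toReal hg hlsc hdom] at hne hsingle hv ⊢
  exact eventually_eSubdiff_eq_singleton hK hne hM hsingle hv

theorem isOpen_setOf_eSubdiff_eConj_eq_singleton [FiniteDimensional ℝ E] {M : Set E}
    (hM : M.Finite) (hsingle : ∀ q w, ESubdiff (EConj g) q = {w} → w ∈ M) :
    IsOpen {q | ∃ v, ESubdiff (EConj g) q = {v}} :=
  isOpen_iff_mem_nhds.mpr fun _ ⟨v, hv⟩ =>
    (eventually_eSubdiff_eConj_eq_singleton hg hlsc hdom hM hsingle hv).mono fun _ h => ⟨v, h⟩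

end Conjugate

section AlmostEverywhere

variable {α : Type*} [MeasurableSpace α] {μ : Measure α}

theorem MeasureTheory.Lp.ae_norm_le_norm {E : Type*} [NormedAddCommGroup E] (f : Lp E ⊤ μ) :
    ∀ᵐ x ∂μ, ‖f x‖ ≤ ‖f‖ := by
  rw [Lp.norm_def, toReal_eLpNorm (Lp.aestronglyMeasurable f)]
  exact ae_le_lpNorm_exponent_top (Lp.memLp f)

theorem MeasureTheory.Lp.ae_forall_dist_le_norm_sub {E : Type*} [NormedAddCommGroup E]
    {f : ℕ → α → E} {f₀ : α → E} {F : ℕ → Lp E ⊤ μ} {F₀ : Lp E ⊤ μ}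
    (hf : ∀ i, f i =ᵐ[μ] F i) (hf₀ : f₀ =ᵐ[μ] F₀) :
    ∀ᵐ x ∂μ, ∀ i, dist (f i x) (f₀ x) ≤ ‖F i - F₀‖ := by
  filter_upwards [ae_all_iff.mpr hf, hf₀, ae_all_iff.mpr fun i => Lp.ae_norm_le_norm (F i - F₀),
    ae_all_iff.mpr fun i => Lp.coeFn_sub (F i) F₀] with x hfx hf₀x hle hsub i
  rw [_root_.dist_eq_norm, hfx i, hf₀x, ← Pi.sub_apply, ← hsub i]
  exact hle i

variable {X Y : Type*} [PseudoMetricSpace X] {φ : X → Set Y} {p : ℕ → α → X} {p₀ : α → X}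
  {a : ℕ → ℝ} {u : ℕ → α → Y} {u₀ : α → Y}

theorem IsCompact.eventually_ae_eq_of_dist_le {P : Set X} (hP : IsCompact P)
    (hφ : ∀ q ∈ P, ∀ᶠ q' in 𝓝 q, φ q' = φ q) (hsub : ∀ q ∈ P, (φ q).Subsingleton)
    (ha : Tendsto a atTop (𝓝 0)) (hdist : ∀ᵐ x ∂μ, ∀ i, dist (p i x) (p₀ x) ≤ a i)
    (hu : ∀ i, ∀ᵐ x ∂μ, u i x ∈ φ (p i x)) (hu₀ : ∀ᵐ x ∂μ, u₀ x ∈ φ (p₀ x)) :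
    ∀ᶠ i in atTop, ∀ᵐ x ∂μ, p₀ x ∈ P → u i x = u₀ x := by
  obtain ⟨δ, hδ, hunif⟩ := hP.exists_pos_forall_dist_lt_eq hφ
  filter_upwards [ha.eventually (gt_mem_nhds hδ)] with i hi
  filter_upwards [hdist, hu i, hu₀] with x hx hux hu₀x hxP
  exact hsub _ hxP (hunif _ hxP _ ((hx i).trans_lt hi) ▸ hux) hu₀x

theorem ae_eventually_eq_of_dist_le {Q : Set X} (hφ : ∀ q ∈ Q, ∀ᶠ q' in 𝓝 q, φ q' = φ q)
    (hsub : ∀ q ∈ Q, (φ q).Subsingleton) (ha : Tendsto a atTop (𝓝 0))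
    (hdist : ∀ᵐ x ∂μ, ∀ i, dist (p i x) (p₀ x) ≤ a i)
    (hu : ∀ i, ∀ᵐ x ∂μ, u i x ∈ φ (p i x)) (hu₀ : ∀ᵐ x ∂μ, u₀ x ∈ φ (p₀ x)) :
    ∀ᵐ x ∂μ, p₀ x ∈ Q → ∀ᶠ i in atTop, u i x = u₀ x := by
  filter_upwards [hdist, ae_all_iff.mpr hu, hu₀] with x hx hux hu₀x hxQ
  have hconv : Tendsto (fun i => p i x) atTop (𝓝 (p₀ x)) :=
    tendsto_iff_dist_tendsto_zero.mpr (squeeze_zero (fun _ => dist_nonneg) hx ha)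
  filter_upwards [hconv.eventually (hφ _ hxQ)] with i hi
  exact hsub _ hxQ (hi ▸ hux i) hu₀x

theorem tendsto_integral_norm_sub_sq_of_ae_eventually_eq [IsFiniteMeasure μ] {E : Type*}
    [NormedAddCommGroup E] {u : ℕ → α → E} {u₀ : α → E} {R : ℝ}
    (hu : ∀ i, AEStronglyMeasurable (u i) μ) (hu₀ : AEStronglyMeasurable u₀ μ)
    (hbound : ∀ i, ∀ᵐ x ∂μ, ‖u i x - u₀ x‖ ≤ R) (hlim : ∀ᵐ x ∂μ, ∀ᶠ i in atTop, u i x = u₀ x) :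
    Tendsto (fun i => ∫ x, ‖u i x - u₀ x‖ ^ 2 ∂μ) atTop (𝓝 0) := by
  have := tendsto_integral_of_dominated_convergence (F := fun i x => ‖u i x - u₀ x‖ ^ 2)
    (f := fun _ => 0) (fun _ => R ^ 2) (fun i => ((hu i).sub hu₀).norm.pow 2) (integrable_const _)
    (fun i => (hbound i).mono fun x hx => by
      rw [norm_pow, norm_norm]
      exact pow_le_pow_left₀ (norm_nonneg _) hx 2)
    (hlim.mono fun x hx => tendsto_const_nhds.congr' <| hx.mono fun i hi => by simp [hi])
  simpa using this

end AlmostEverywhere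

theorem locally_strong_convergence_of_control_general
    {n m : ℕ}
    (Ω : Set (Vec n)) (hΩbdd : Bornology.IsBounded Ω)
    {Y : Type*} [NormedAddCommGroup Y] [InnerProductSpace ℝ Y] [CompleteSpace Y]
    (M : Finset (Vec m)) (g : Vec m → EReal)
    (hproper : EProper g) (hlsc : LowerSemicontinuous g)
    (hdom : {v | g v ≠ ⊤} = convexHull ℝ (M : Set (Vec m)))
    (S : Lp (Vec m) 2 (volume.restrict Ω) → Y)
    (S' : Lp (Vec m) 2 (volume.restrict Ω) → (Lp (Vec m) 2 (volume.restrict Ω) →L[ℝ] Y))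
    -- (H4) adjoint convergence in `V* ↪ L^∞(Ω;ℝᵐ)`
    (Vd : Type*) [NormedAddCommGroup Vd] [NormedSpace ℝ Vd]
    (ι : Vd →L[ℝ] Lp (Vec m) 2 (volume.restrict Ω))
    (j : Vd →L[ℝ] Lp (Vec m) ⊤ (volume.restrict Ω))
    (hιj : ∀ w : Vd, (fun x => (ι w) x) =ᵐ[volume.restrict Ω] (fun x => (j w) x))
    (P : Lp (Vec m) 2 (volume.restrict Ω) → Y → Vd)
    (hP : ∀ u y, ι (P u y) = ContinuousLinearMap.adjoint (S' u) y)
    -- targets, minimizers and dual variables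
    (z : ℕ → Y) (zbar : Y)
    (u : ℕ → Lp (Vec m) 2 (volume.restrict Ω))
    (ubar : Lp (Vec m) 2 (volume.restrict Ω))
    (pn : ℕ → Lp (Vec m) 2 (volume.restrict Ω))
    (hpn : ∀ i, pn i = ContinuousLinearMap.adjoint (S' (u i)) (z i - S (u i)))
    (pbar : Lp (Vec m) 2 (volume.restrict Ω))
    (hpbar : pbar = ContinuousLinearMap.adjoint (S' ubar) (zbar - S ubar))
    (hpconv : Tendsto
      (fun i => ‖P (u i) (z i - S (u i)) - P ubar (zbar - S ubar)‖) atTop (nhds (0:ℝ)))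
    -- pointwise optimality: `u_n(x) ∈ ∂g*(p_n(x))` and `ū(x) ∈ ∂g*(p̄(x))` a.e.
    (hptw : ∀ i, ∀ᵐ x ∂(volume.restrict Ω), (u i) x ∈ ESubdiff (EConj g) ((pn i) x))
    (hptwbar : ∀ᵐ x ∂(volume.restrict Ω), ubar x ∈ ESubdiff (EConj g) (pbar x))
    -- on the single-valuedness set `Q` the value of `∂g*` lies in `M`
    (hQM : ∀ q : Vec m, ∀ v, ESubdiff (EConj g) q = {v} → v ∈ M) :
    -- (i) for any compact subset of the single-valuedness set `Q`,
    -- eventually `u_n = ū ∈ M` a.e. on `Ω_P`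
    (∀ Pset : Set (Vec m), IsCompact Pset →
      Pset ⊆ {q | ∃ v, ESubdiff (EConj g) q = {v}} →
      ∃ N : ℕ, ∀ i ≥ N,
        ∀ᵐ x ∂((volume.restrict Ω).restrict {x | pbar x ∈ Pset}),
          (u i) x = ubar x ∧ ubar x ∈ (M : Set (Vec m)))
    -- (ii) strong convergence in `L²(Ω_Q;ℝᵐ)` and `ū ∈ M` a.e. on `Ω_Q`
    ∧ Tendsto (fun i => ∫ x in {x | pbar x ∈ {q | ∃ v, ESubdiff (EConj g) q = {v}}},
        ‖(u i) x - ubar x‖^2 ∂(volume.restrict Ω)) atTop (nhds (0:ℝ))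
    ∧ (∀ᵐ x ∂((volume.restrict Ω).restrict
        {x | pbar x ∈ {q | ∃ v, ESubdiff (EConj g) q = {v}}}),
        ubar x ∈ (M : Set (Vec m))) := by
  have : IsFiniteMeasure (volume.restrict Ω) := ⟨by simpa using hΩbdd.measure_lt_top⟩
  set Q := {q : Vec m | ∃ v, ESubdiff (EConj g) q = {v}}
  have hdomK : IsCompact {v | g v ≠ ⊤} := hdom ▸ M.finite_toSet.isCompact_convexHull ℝ
  have hloc : ∀ q ∈ Q, ∀ᶠ q' in 𝓝 q, ESubdiff (EConj g) q' = ESubdiff (EConj g) q :=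
    fun q ⟨v, hv⟩ => (eventually_eSubdiff_eConj_eq_singleton hproper hlsc hdomK M.finite_toSet
      hQM hv).mono fun _ h => h.trans hv.symm
  have hsub : ∀ q ∈ Q, (ESubdiff (EConj g) q).Subsingleton := fun q ⟨v, hv⟩ =>
    hv ▸ subsingleton_singleton
  have hQmeas : MeasurableSet {x | pbar x ∈ Q} :=
    (isOpen_setOf_eSubdiff_eConj_eq_singleton hproper hlsc hdomK M.finite_toSet
      hQM).measurableSet.preimage (Lp.stronglyMeasurable pbar).measurable
  have hdual := Lp.ae_forall_dist_le_norm_sub (f := fun i x => pn i x) (f₀ := pbar)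
    (fun i => by rw [hpn i, ← hP]; exact hιj _) (by rw [hpbar, ← hP]; exact hιj _)
  have ha := tendsto_iff_norm_sub_tendsto_zero.mp
    ((j.continuous.tendsto _).comp (tendsto_iff_norm_sub_tendsto_zero.mpr hpconv))
  have hubarM : ∀ᵐ x ∂(volume.restrict Ω), pbar x ∈ Q → ubar x ∈ (M : Set (Vec m)) := by
    filter_upwards [hptwbar] with x hx ⟨v, hv⟩
    exact (mem_singleton_iff.mp (hv ▸ hx)) ▸ hQM _ v hv
  refine ⟨fun Pset hPc hPQ => ?_, ?_, (ae_restrict_iff' hQmeas).mpr hubarM⟩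
  · obtain ⟨N, hN⟩ := eventually_atTop.mp (hPc.eventually_ae_eq_of_dist_le
      (fun q hq => hloc q (hPQ hq)) (fun q hq => hsub q (hPQ hq)) ha hdual hptw hptwbar)
    refine ⟨N, fun i hi => (ae_restrict_iff' (hPc.isClosed.measurableSet.preimage
      (Lp.stronglyMeasurable pbar).measurable)).mpr ?_⟩
    filter_upwards [hN i hi, hubarM] with x h1 h2 hx using ⟨h1 hx, h2 (hPQ hx)⟩
  · obtain ⟨R, hR⟩ := exists_norm_le_of_mem_eSubdiff_eConj hproper hlsc hdomK
    refine tendsto_integral_norm_sub_sq_of_ae_eventually_eq (R := 2 * R)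
      (fun i => (Lp.aestronglyMeasurable _).restrict) (Lp.aestronglyMeasurable _).restrict
      (fun i => ae_restrict_of_ae ?_) ((ae_restrict_iff' hQmeas).mpr ?_)
    · filter_upwards [hptw i, hptwbar] with x h1 h2
      linarith [norm_sub_le (u i x) (ubar x), hR _ _ h1, hR _ _ h2]
    · exact ae_eventually_eq_of_dist_le (Q := Q) hloc hsub ha hdual hptw hptwbar

/-- locally strong convergence of the control: in the setting of the
dual stability result, let `Q ⊆ ℝᵐ` be the set where `∂g*` is single-valued and
`Ω_P = {x ∈ Ω : p̄(x) ∈ P}`. If the minimizers `u_n` of `E^{z_n}` have dual variables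
`p_n → p̄` in `V*` and limit minimizer `ū`, then (i) for compact `P ⊂⊂ Q` and `n` large,
`u_n = ū ∈ M` a.e. on `Ω_P`; (ii) `u_n → ū` strongly in `L²(Ω_Q;ℝᵐ)` and `ū ∈ M`
a.e. on `Ω_Q`. -/
theorem locally_strong_convergence_of_control
    {n m : ℕ} (hm : 2 ≤ m)
    (Ω : Set (Vec n)) (hΩopen : IsOpen Ω) (hΩbdd : Bornology.IsBounded Ω)
    {Y : Type*} [NormedAddCommGroup Y] [InnerProductSpace ℝ Y] [CompleteSpace Y]
    (M : Finset (Vec m)) (g : Vec m → EReal)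
    (hproper : EProper g) (hconv : EConvexOn g) (hlsc : LowerSemicontinuous g)
    (hdom : {v | g v ≠ ⊤} = convexHull ℝ (M : Set (Vec m)))
    (S : Lp (Vec m) 2 (volume.restrict Ω) → Y)
    -- (H1) weak-to-weak continuity
    (hS : ∀ (u : ℕ → Lp (Vec m) 2 (volume.restrict Ω)) (l : Lp (Vec m) 2 (volume.restrict Ω)),
      WeakTendsto u l → WeakTendsto (fun i => S (u i)) (S l))
    -- (H2) Fréchet differentiability
    (S' : Lp (Vec m) 2 (volume.restrict Ω) → (Lp (Vec m) 2 (volume.restrict Ω) →L[ℝ] Y))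
    (hS' : ∀ u, HasFDerivAt S (S' u) u)
    -- (H3) compactness
    (hScpt : ∀ (u : ℕ → Lp (Vec m) 2 (volume.restrict Ω)) (l : Lp (Vec m) 2 (volume.restrict Ω)),
      WeakTendsto u l → Tendsto (fun i => ‖S (u i) - S l‖) atTop (nhds (0:ℝ)))
    -- (H4) adjoint convergence in `V* ↪ L^∞(Ω;ℝᵐ)`
    (Vd : Type*) [NormedAddCommGroup Vd] [NormedSpace ℝ Vd]
    (ι : Vd →L[ℝ] Lp (Vec m) 2 (volume.restrict Ω)) (hι : Function.Injective ι)
    (j : Vd →L[ℝ] Lp (Vec m) ⊤ (volume.restrict Ω)) (hj : Function.Injective j)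
    (hιj : ∀ w : Vd, (fun x => (ι w) x) =ᵐ[volume.restrict Ω] (fun x => (j w) x))
    (P : Lp (Vec m) 2 (volume.restrict Ω) → Y → Vd)
    (hP : ∀ u y, ι (P u y) = ContinuousLinearMap.adjoint (S' u) y)
    (hadj : ∀ (ui : ℕ → Lp (Vec m) 2 (volume.restrict Ω)) (l : Lp (Vec m) 2 (volume.restrict Ω)),
      WeakTendsto ui l → ∀ y : Y,
        Tendsto (fun i => ‖P (ui i) y - P l y‖) atTop (nhds (0:ℝ)))
    -- targets, minimizers and dual variables
    (z : ℕ → Y) (zbar : Y) (hz : Tendsto (fun i => ‖z i - zbar‖) atTop (nhds (0:ℝ)))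
    (u : ℕ → Lp (Vec m) 2 (volume.restrict Ω))
    (hu : ∀ i, ∀ v, energy (volume.restrict Ω) S (z i) g (u i) ≤
      energy (volume.restrict Ω) S (z i) g v)
    (ubar : Lp (Vec m) 2 (volume.restrict Ω))
    (hubar : ∀ v, energy (volume.restrict Ω) S zbar g ubar ≤
      energy (volume.restrict Ω) S zbar g v)
    (huw : WeakTendsto u ubar)
    (pn : ℕ → Lp (Vec m) 2 (volume.restrict Ω))
    (hpn : ∀ i, pn i = ContinuousLinearMap.adjoint (S' (u i)) (z i - S (u i)))
    (pbar : Lp (Vec m) 2 (volume.restrict Ω))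
    (hpbar : pbar = ContinuousLinearMap.adjoint (S' ubar) (zbar - S ubar))
    (hpconv : Tendsto
      (fun i => ‖P (u i) (z i - S (u i)) - P ubar (zbar - S ubar)‖) atTop (nhds (0:ℝ)))
    -- pointwise optimality: `u_n(x) ∈ ∂g*(p_n(x))` and `ū(x) ∈ ∂g*(p̄(x))` a.e.
    (hptw : ∀ i, ∀ᵐ x ∂(volume.restrict Ω), (u i) x ∈ ESubdiff (EConj g) ((pn i) x))
    (hptwbar : ∀ᵐ x ∂(volume.restrict Ω), ubar x ∈ ESubdiff (EConj g) (pbar x))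
    -- on the single-valuedness set `Q` the value of `∂g*` lies in `M`
    (hQM : ∀ q : Vec m, ∀ v, ESubdiff (EConj g) q = {v} → v ∈ M) :
    -- (i) for any compact subset of the single-valuedness set `Q`,
    -- eventually `u_n = ū ∈ M` a.e. on `Ω_P`
    (∀ Pset : Set (Vec m), IsCompact Pset →
      Pset ⊆ {q | ∃ v, ESubdiff (EConj g) q = {v}} →
      ∃ N : ℕ, ∀ i ≥ N,
        ∀ᵐ x ∂((volume.restrict Ω).restrict {x | pbar x ∈ Pset}),
          (u i) x = ubar x ∧ ubar x ∈ (M : Set (Vec m)))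
    -- (ii) strong convergence in `L²(Ω_Q;ℝᵐ)` and `ū ∈ M` a.e. on `Ω_Q`
    ∧ Tendsto (fun i => ∫ x in {x | pbar x ∈ {q | ∃ v, ESubdiff (EConj g) q = {v}}},
        ‖(u i) x - ubar x‖^2 ∂(volume.restrict Ω)) atTop (nhds (0:ℝ))
    ∧ (∀ᵐ x ∂((volume.restrict Ω).restrict
        {x | pbar x ∈ {q | ∃ v, ESubdiff (EConj g) q = {v}}}),
        ubar x ∈ (M : Set (Vec m))) :=
  locally_strong_convergence_of_control_general Ω hΩbdd M g hproper hlsc hdom S S' Vd ι j hιj P hP z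
    zbar u ubar pn hpn pbar hpbar hpconv hptw hptwbar hQM
end
end

section
/- Let g = (α c + δ_M)** depend on α > 0, with c : ℝᵐ → ℝ non-negative, strictly convex and lower semi-continuous, and M ⊂ ℝᵐ finite. For z ∈ Y let M₀ := inf_{u∈U} ‖S(u) − z‖_Y and O := {u ∈ U : ‖S(u) − z‖_Y = M₀}. If S : U → Y is weak-to-weak continuous, then with respect to weak convergence in U, the functionals (1/α)(E^z − M₀²/2) Γ-converge as α → 0 to δ_O + G₁, where G₁(u) = ∫_Ω g₁**(u(x)) dx for g₁ = c + δ_M and δ_O is the indicator functional of O. -/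
/-
Positive homogeneity of the biconjugate gives `g_α = α g` with `g = (c + δ_M)**`, so the
rescaled functional is `α⁻¹ (½‖S u - z‖² - M₀²/2) + ∫ g(u)`. The first term is nonnegative,
vanishes on `O`, and off `O` blows up along every weakly convergent sequence, because `S` is
weak-to-weak continuous and the norm is weakly lower semicontinuous. The second term is weakly
lower semicontinuous: `g` is nonnegative, convex and lower semicontinuous, so by Fatou's lemma
the integral functional is strongly lower semicontinuous with convex sublevel sets, which are
therefore weakly closed. Constant sequences are recovery sequences.
-/

open MeasureTheory Set Filter Topology

noncomputable section

open scoped ENNReal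

section WeakConvergence

variable {X : Type*} [NormedAddCommGroup X] [InnerProductSpace ℝ X] {u : ℕ → X} {l : X}

lemma WeakTendsto.sub_const (hu : WeakTendsto u l) (z : X) :
    WeakTendsto (fun i => u i - z) (l - z) := fun w => by
  simpa only [inner_sub_left] using (hu w).sub_const (inner ℝ z w)

lemma WeakTendsto.comp_strictMono (hu : WeakTendsto u l) {φ : ℕ → ℕ} (hφ : StrictMono φ) :
    WeakTendsto (u ∘ φ) l := fun w => (hu w).comp hφ.tendsto_atTop

lemma WeakTendsto.eventually_lt_norm (hu : WeakTendsto u l) {r : ℝ} (hr : r < ‖l‖) :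
    ∀ᶠ i in atTop, r < ‖u i‖ := by
  rcases (norm_nonneg l).eq_or_lt with hl | hl
  · exact Eventually.of_forall fun i => hr.trans_le (hl ▸ norm_nonneg _)
  have hlim : r * ‖l‖ < inner ℝ l l := by
    rw [real_inner_self_eq_norm_mul_norm]
    exact mul_lt_mul_of_pos_right hr hl
  filter_upwards [(hu l).eventually (lt_mem_nhds hlim)] with i hi
  exact lt_of_mul_lt_mul_right (hi.trans_le (real_inner_le_norm _ _)) hl.le

/-- With `p` the projection of `l` onto `C`, the variational inequality `⟪u i - p, l - p⟫ ≤ 0`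
passes to the limit as `‖l - p‖² ≤ 0`. -/
lemma IsClosed.mem_of_weakTendsto [CompleteSpace X] {C : Set X} (hC : IsClosed C)
    (hconv : Convex ℝ C) (hu : ∀ i, u i ∈ C) (hul : WeakTendsto u l) : l ∈ C := by
  obtain ⟨p, hpC, hp⟩ :=
    exists_norm_eq_iInf_of_complete_convex ⟨u 0, hu 0⟩ hC.isComplete hconv l
  have hproj := (norm_eq_iInf_iff_real_inner_le_zero hconv hpC).mp hp
  have hlim : Tendsto (fun i => inner ℝ (u i - p) (l - p)) atTop
      (𝓝 (inner ℝ (l - p) (l - p))) :=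
    (hul.sub_const p) (l - p)
  have hnonpos : inner ℝ (l - p) (l - p) ≤ (0 : ℝ) :=
    le_of_tendsto hlim (Eventually.of_forall fun i => real_inner_comm (l - p) _ ▸ hproj _ (hu i))
  rwa [sub_eq_zero.mp (real_inner_self_nonpos.mp hnonpos)]

/-- The sublevel sets of `F` are closed and convex, hence weakly sequentially closed. -/
lemma LowerSemicontinuous.le_liminf_of_weakTendsto [CompleteSpace X] {β : Type*}
    [CompleteLinearOrder β] [DenselyOrdered β] [TopologicalSpace β] [OrderTopology β]
    {F : X → β} (hF : LowerSemicontinuous F) (hFq : QuasiconvexOn ℝ univ F)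
    (hul : WeakTendsto u l) : F l ≤ liminf (fun i => F (u i)) atTop := by
  by_contra! h
  obtain ⟨r, hr, hrl⟩ := exists_between h
  obtain ⟨φ, hφ, hφr⟩ :=
    extraction_of_frequently_atTop (frequently_lt_of_liminf_lt (by isBoundedDefault) hr)
  have hC : IsClosed {x ∈ univ | F x ≤ r} := by
    simp only [mem_univ, true_and]
    exact lowerSemicontinuous_iff_isClosed_preimage.mp hF r
  exact hrl.not_ge (hC.mem_of_weakTendsto (hFq r) (fun j => ⟨trivial, (hφr j).le⟩)
    (hul.comp_strictMono hφ)).2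

end WeakConvergence

lemma EConvexOn.toENNReal_le {X : Type*} [AddCommGroup X] [Module ℝ X] {g : X → EReal}
    (hg : EConvexOn g) (hg0 : ∀ v, 0 ≤ g v) (x y : X) {a b : ℝ} (ha : 0 ≤ a) (hb : 0 ≤ b)
    (hab : a + b = 1) :
    (g (a • x + b • y)).toENNReal ≤
      ENNReal.ofReal a * (g x).toENNReal + ENNReal.ofReal b * (g y).toENNReal := by
  have ha' : (0 : EReal) ≤ a := by exact_mod_cast ha
  have hb' : (0 : EReal) ≤ b := by exact_mod_cast hb
  refine (EReal.toENNReal_le_toENNReal (hg x y a b ha hb hab)).trans_eq ?_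
  rw [EReal.toENNReal_add (mul_nonneg ha' (hg0 x)) (mul_nonneg hb' (hg0 y)),
    EReal.toENNReal_mul ha', EReal.toENNReal_mul hb', EReal.real_coe_toENNReal,
    EReal.real_coe_toENNReal]

section IntegralFunctional

variable {α : Type*} [MeasurableSpace α] {μ : Measure α}
  {E : Type*} [NormedAddCommGroup E] [MeasurableSpace E] [BorelSpace E] {g : E → EReal}

lemma lowerSemicontinuous_lintegral_toENNReal_comp {p : ℝ≥0∞} [Fact (1 ≤ p)]
    (hg : LowerSemicontinuous g) :
    LowerSemicontinuous fun v : Lp E p μ => ∫⁻ x, (g (v x)).toENNReal ∂μ := by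
  have hg' : LowerSemicontinuous fun v => (g v).toENNReal :=
    EReal.continuous_toENNReal.comp_lowerSemicontinuous hg fun _ _ => EReal.toENNReal_le_toENNReal
  refine lowerSemicontinuous_iff_isClosed_preimage.mpr fun r => IsSeqClosed.isClosed ?_
  intro v l hvr hvl
  obtain ⟨ns, -, hae⟩ := (tendstoInMeasure_of_tendsto_Lp hvl).exists_seq_tendsto_ae
  -- Fatou's lemma along an a.e. convergent subsequence
  calc ∫⁻ x, (g (l x)).toENNReal ∂μ
      ≤ ∫⁻ x, liminf (fun j => (g (v (ns j) x)).toENNReal) atTop ∂μ :=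
        lintegral_mono_ae <| hae.mono fun x hx => (hg'.le_liminf _).trans hx.liminf_le_liminf_comp
    _ ≤ liminf (fun j => ∫⁻ x, (g (v (ns j) x)).toENNReal ∂μ) atTop :=
        lintegral_liminf_le' fun j =>
          (hg.measurable.ereal_toENNReal).comp_aemeasurable (Lp.aestronglyMeasurable _).aemeasurable
    _ ≤ r := liminf_le_of_frequently_le' (Frequently.of_forall fun j => hvr (ns j))

lemma quasiconvexOn_lintegral_toENNReal_comp [NormedSpace ℝ E] {p : ℝ≥0∞} [Fact (1 ≤ p)]
    (hg : EConvexOn g) (hg0 : ∀ v, 0 ≤ g v) (hgm : Measurable g) :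
    QuasiconvexOn ℝ univ fun v : Lp E p μ => ∫⁻ x, (g (v x)).toENNReal ∂μ := by
  rintro r v ⟨-, hv⟩ w ⟨-, hw⟩ a b ha hb hab
  have hae : (fun x => (a • v + b • w : Lp E p μ) x) =ᵐ[μ]
      fun x => a • v x + b • w x := by
    filter_upwards [Lp.coeFn_add (a • v) (b • w), Lp.coeFn_smul a v, Lp.coeFn_smul b w]
      with x h1 h2 h3
    rw [h1, Pi.add_apply, h2, h3, Pi.smul_apply, Pi.smul_apply]
  refine ⟨trivial, ?_⟩
  calc ∫⁻ x, (g ((a • v + b • w : Lp E p μ) x)).toENNReal ∂μ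
      = ∫⁻ x, (g (a • v x + b • w x)).toENNReal ∂μ :=
        lintegral_congr_ae (hae.fun_comp fun y => (g y).toENNReal)
    _ ≤ ∫⁻ x, (ENNReal.ofReal a * (g (v x)).toENNReal +
          ENNReal.ofReal b * (g (w x)).toENNReal) ∂μ :=
        lintegral_mono fun x => hg.toENNReal_le hg0 _ _ ha hb hab
    _ = ENNReal.ofReal a * ∫⁻ x, (g (v x)).toENNReal ∂μ +
          ENNReal.ofReal b * ∫⁻ x, (g (w x)).toENNReal ∂μ := by
        have hvm : AEMeasurable (fun x => (g (v x)).toENNReal) μ :=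
          hgm.ereal_toENNReal.comp_aemeasurable (Lp.aestronglyMeasurable v).aemeasurable
        rw [lintegral_add_left' (hvm.const_mul _),
          lintegral_const_mul' _ _ ENNReal.ofReal_ne_top,
          lintegral_const_mul' _ _ ENNReal.ofReal_ne_top]
    _ ≤ ENNReal.ofReal a * r + ENNReal.ofReal b * r := by gcongr
    _ = r := by rw [← add_mul, ← ENNReal.ofReal_add ha hb, hab, ENNReal.ofReal_one, one_mul]

end IntegralFunctional

section IntG

variable {α : Type*} [MeasurableSpace α] {μ : Measure α} {k : ℕ} {g : Vec k → EReal}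

lemma intG_nonneg (hg0 : ∀ v, 0 ≤ g v) (u : α → Vec k) : 0 ≤ intG μ g u := by
  rw [intG]
  split_ifs
  · exact EReal.coe_nonneg.mpr (integral_nonneg fun x => EReal.toReal_nonneg (hg0 _))
  · exact le_top

lemma intG_eq_lintegral (hg0 : ∀ v, 0 ≤ g v) (hgm : Measurable g) {u : α → Vec k}
    (hu : AEMeasurable u μ) : intG μ g u = ∫⁻ x, (g (u x)).toENNReal ∂μ := by
  have hm : AEMeasurable (fun x => (g (u x)).toENNReal) μ :=
    hgm.ereal_toENNReal.comp_aemeasurable hu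
  rw [intG]
  split_ifs with h
  · obtain ⟨hfin, hint⟩ := h
    have hint0 : 0 ≤ ∫ x, (g (u x)).toReal ∂μ :=
      integral_nonneg fun x => EReal.toReal_nonneg (hg0 _)
    rw [← max_eq_left hint0, ← EReal.coe_ennreal_ofReal, ofReal_integral_eq_lintegral_ofReal hint
      (Eventually.of_forall fun x => EReal.toReal_nonneg (hg0 _))]
    exact congrArg _
      (lintegral_congr_ae (hfin.mono fun x hx => (EReal.toENNReal_of_ne_top hx).symm))
  · have hinf : ∫⁻ x, (g (u x)).toENNReal ∂μ = ⊤ := by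
      by_contra hfin
      refine h ⟨?_, ?_⟩
      · filter_upwards [ae_lt_top' hm hfin] with x hx
        exact EReal.toENNReal_ne_top_iff.mp hx.ne
      · exact (integrable_toReal_of_lintegral_ne_top hm hfin).congr
          (Eventually.of_forall fun x => EReal.toReal_toENNReal (hg0 _))
    rw [hinf, EReal.coe_ennreal_top]

lemma intG_const_mul {a : ℝ} (ha : 0 < a) (g : Vec k → EReal) (u : α → Vec k) :
    intG μ (fun v => (a : EReal) * g v) u = a * intG μ g u := by
  have hmul_top : ∀ x : EReal, (a : EReal) * x = ⊤ ↔ x = ⊤ := fun x => by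
    induction x using EReal.rec <;>
      simp [EReal.coe_mul_top_of_pos ha, EReal.coe_mul_bot_of_pos ha, ← EReal.coe_mul]
  have hcond : ((∀ᵐ x ∂μ, (a : EReal) * g (u x) ≠ ⊤) ∧
      Integrable (fun x => ((a : EReal) * g (u x)).toReal) μ) ↔
      ((∀ᵐ x ∂μ, g (u x) ≠ ⊤) ∧ Integrable (fun x => (g (u x)).toReal) μ) := by
    simp only [ne_eq, hmul_top, EReal.toReal_mul, EReal.toReal_coe,
      integrable_const_mul_iff (isUnit_iff_ne_zero.mpr ha.ne')]
  by_cases h : (∀ᵐ x ∂μ, g (u x) ≠ ⊤) ∧ Integrable (fun x => (g (u x)).toReal) μ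
  · rw [intG, intG, if_pos (hcond.mpr h), if_pos h]
    simp only [EReal.toReal_mul, EReal.toReal_coe, integral_const_mul, EReal.coe_mul]
  · rw [intG, intG, if_neg (mt hcond.mp h), if_neg h, EReal.coe_mul_top_of_pos ha]

lemma inv_mul_energy_const_mul_sub {Y : Type*} [NormedAddCommGroup Y] {a : ℝ} (ha : 0 < a)
    (S : Lp (Vec k) 2 μ → Y) (z : Y) (g : Vec k → EReal) (u : Lp (Vec k) 2 μ) (m : ℝ) :
    ((a⁻¹ : ℝ) : EReal) * (energy μ S z (fun v => (a : EReal) * g v) u - (m : EReal)) =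
      ((a⁻¹ * ((1/2) * ‖S u - z‖^2 - m) : ℝ) : EReal) + intG μ g u := by
  rw [energy, intG_const_mul ha]
  induction (intG μ g u) using EReal.rec with
  | bot => simp [EReal.coe_mul_bot_of_pos ha, EReal.coe_mul_bot_of_pos (inv_pos.mpr ha)]
  | coe r =>
    norm_cast
    field_simp
    ring
  | top =>
    rw [EReal.coe_mul_top_of_pos ha, EReal.add_top_of_ne_bot (EReal.coe_ne_bot _),
      EReal.top_sub_coe, EReal.coe_mul_top_of_pos (inv_pos.mpr ha), EReal.add_top_of_ne_bot
      (EReal.coe_ne_bot _)]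

lemma intG_le_liminf_of_weakTendsto (hg0 : ∀ v, 0 ≤ g v) (hg : LowerSemicontinuous g)
    (hgc : EConvexOn g) {u : ℕ → Lp (Vec k) 2 μ} {l : Lp (Vec k) 2 μ}
    (hul : WeakTendsto u l) :
    intG μ g l ≤ liminf (fun i => intG μ g (u i)) atTop := by
  have hG : ∀ v : Lp (Vec k) 2 μ, intG μ g v = ∫⁻ x, (g (v x)).toENNReal ∂μ := fun v =>
    intG_eq_lintegral hg0 hg.measurable (Lp.aestronglyMeasurable v).aemeasurable
  have hcoe := Monotone.map_liminf_of_continuousAt (F := atTop)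
    EReal.coe_ennreal_strictMono.monotone (fun i => ∫⁻ x, (g (u i x)).toENNReal ∂μ)
    continuous_coe_ennreal_ereal.continuousAt
  rw [Function.comp_def] at hcoe
  simp only [hG, ← hcoe]
  exact EReal.coe_ennreal_le_coe_ennreal_iff.mpr
    ((lowerSemicontinuous_lintegral_toENNReal_comp hg).le_liminf_of_weakTendsto
      (quasiconvexOn_lintegral_toENNReal_comp hgc hg0 hg.measurable) hul)

end IntG

lemma EReal.coe_mul_iSup {ι : Sort*} {a : ℝ} (ha : 0 < a) (h : ι → EReal) :
    (a : EReal) * ⨆ i, h i = ⨆ i, (a : EReal) * h i := by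
  have hmono : ∀ b : ℝ, 0 < b → Monotone fun x : EReal => (b : EReal) * x :=
    fun b hb _ _ hxy => mul_le_mul_of_nonneg_left hxy (by exact_mod_cast hb.le)
  have hcancel : ∀ x : EReal, ((a⁻¹ : ℝ) : EReal) * ((a : EReal) * x) = x := fun x => by
    rw [← mul_assoc, ← EReal.coe_mul, inv_mul_cancel₀ ha.ne', EReal.coe_one, one_mul]
  refine le_antisymm ?_ (iSup_le fun i => hmono a ha (le_iSup h i))
  calc (a : EReal) * ⨆ i, h i
      ≤ (a : EReal) * (((a⁻¹ : ℝ) : EReal) * ⨆ i, (a : EReal) * h i) :=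
        hmono a ha <| iSup_le fun i => (hcancel (h i)).symm.trans_le <|
          hmono a⁻¹ (inv_pos.mpr ha) (le_iSup (fun i => (a : EReal) * h i) i)
    _ = ⨆ i, (a : EReal) * h i := by
        rw [← mul_assoc, ← EReal.coe_mul, mul_inv_cancel₀ ha.ne', EReal.coe_one, one_mul]

section Conjugate

variable {X : Type*} [NormedAddCommGroup X] [InnerProductSpace ℝ X]

lemma EConvexOn.iSup {ι : Sort*} {f : ι → X → EReal} (hf : ∀ i, EConvexOn (f i)) :
    EConvexOn fun x => ⨆ i, f i x := by
  intro x y a b ha hb hab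
  exact iSup_le fun i => (hf i x y a b ha hb hab).trans <| add_le_add
    (mul_le_mul_of_nonneg_left (le_iSup (fun i => f i x) i) (by exact_mod_cast ha))
    (mul_le_mul_of_nonneg_left (le_iSup (fun i => f i y) i) (by exact_mod_cast hb))

lemma econvexOn_inner_sub_const (v : X) (c : EReal) :
    EConvexOn fun p : X => ((inner ℝ p v : ℝ) : EReal) - c := by
  intro x y a b ha hb hab
  beta_reduce
  have hinner : inner ℝ (a • x + b • y) v = a * inner ℝ x v + b * inner ℝ y v := by
    rw [inner_add_left, real_inner_smul_left, real_inner_smul_left]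
  induction c using EReal.rec with
  | bot =>
    rcases ha.eq_or_lt with rfl | ha'
    · simp [show b = 1 by linarith]
    · have hb' : (0 : EReal) ≤ b * ⊤ := mul_nonneg (by exact_mod_cast hb) le_top
      simp [EReal.coe_mul_top_of_pos ha', EReal.top_add_of_ne_bot (ne_bot_of_le_ne_bot
        EReal.zero_ne_bot hb')]
  | coe r =>
    norm_cast
    exact le_of_eq (by rw [hinner]; linear_combination r * hab)
  | top => simp

lemma econvexOn_econj (f : X → EReal) : EConvexOn (EConj f) :=
  EConvexOn.iSup fun v => econvexOn_inner_sub_const v (f v)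

lemma lowerSemicontinuous_econj (f : X → EReal) : LowerSemicontinuous (EConj f) := by
  refine lowerSemicontinuous_iSup fun v => ?_
  simp only [sub_eq_add_neg]
  exact EReal.lowerSemicontinuous_add.comp
    ((continuous_coe_real_ereal.comp (continuous_id.inner continuous_const)).prodMk
      continuous_const)

lemma econj_zero_nonpos {f : X → EReal} (hf : ∀ v, 0 ≤ f v) : EConj f 0 ≤ 0 :=
  iSup_le fun v => by simpa using hf v

lemma econj_econj_nonneg {f : X → EReal} (hf : ∀ v, 0 ≤ f v) (w : X) :
    0 ≤ EConj (EConj f) w :=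
  calc (0 : EReal) ≤ ((inner ℝ w 0 : ℝ) : EReal) - EConj f 0 := by
        simpa using econj_zero_nonpos hf
    _ ≤ EConj (EConj f) w := le_iSup (fun p => ((inner ℝ w p : ℝ) : EReal) - EConj f p) 0

lemma econj_const_mul {a : ℝ} (ha : 0 < a) (f : X → EReal) (p : X) :
    EConj (fun v => (a : EReal) * f v) p = a * EConj f (a⁻¹ • p) := by
  rw [EConj, EConj, EReal.coe_mul_iSup ha]
  congr 1
  funext v
  rw [EReal.mul_sub_of_nonneg_of_ne_top (by exact_mod_cast ha.le) (EReal.coe_ne_top a),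
    ← EReal.coe_mul, real_inner_smul_left, mul_inv_cancel_left₀ ha.ne']

lemma econj_econj_const_mul {a : ℝ} (ha : 0 < a) (f : X → EReal) (w : X) :
    EConj (EConj fun v => (a : EReal) * f v) w = a * EConj (EConj f) w := by
  calc EConj (EConj fun v => (a : EReal) * f v) w
      = ⨆ q, ((inner ℝ w (a • q) : ℝ) : EReal) - EConj (fun v => (a : EReal) * f v) (a • q) :=
        ((MulAction.surjective₀ ha.ne').iSup_comp _).symm
    _ = ⨆ q, (a : EReal) * (((inner ℝ w q : ℝ) : EReal) - EConj f q) := by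
        refine iSup_congr fun q => ?_
        rw [econj_const_mul ha, inv_smul_smul₀ ha.ne', real_inner_smul_right, EReal.coe_mul,
          EReal.mul_sub_of_nonneg_of_ne_top (by exact_mod_cast ha.le) (EReal.coe_ne_top a)]
    _ = a * EConj (EConj f) w := (EReal.coe_mul_iSup ha _).symm

end Conjugate

lemma tendsto_inv_mul_atTop_of_eventually_ge {α d : ℕ → ℝ} (hα0 : ∀ i, 0 < α i)
    (hα : Tendsto α atTop (𝓝 0)) {δ : ℝ} (hδ : 0 < δ) (hd : ∀ᶠ i in atTop, δ ≤ d i) :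
    Tendsto (fun i => (α i)⁻¹ * d i) atTop atTop := by
  have hinv : Tendsto (fun i => (α i)⁻¹ * δ) atTop atTop :=
    (tendsto_inv_nhdsGT_zero.comp (tendsto_nhdsWithin_iff.mpr
      ⟨hα, Eventually.of_forall hα0⟩)).atTop_mul_const hδ
  exact tendsto_atTop_mono' atTop
    (hd.mono fun i hi => mul_le_mul_of_nonneg_left hi (inv_nonneg.mpr (hα0 i).le)) hinv

lemma EReal.liminf_coe_add_eq_top {d : ℕ → ℝ} (hd : Tendsto d atTop atTop) {G : ℕ → EReal}
    (hG : ∀ i, 0 ≤ G i) : liminf (fun i => (d i : EReal) + G i) atTop = ⊤ :=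
  top_le_iff.mp <| ((EReal.tendsto_coe_nhds_top_iff.mpr hd).liminf_eq).symm.trans_le <|
    liminf_le_liminf (Eventually.of_forall fun i => le_add_of_nonneg_right (hG i))

section GammaLimit

variable {X Y : Type*} [NormedAddCommGroup Y] {S : X → Y} {z : Y} {M0 : ℝ} {G : X → EReal}

/-- Off the best-approximation set the fidelity excess stays bounded below along a weakly
convergent sequence, by weak lower semicontinuity of the norm, so dividing it by `α → 0`
drives the rescaled functional to `⊤`. -/
lemma indicator_add_le_liminf_rescaled [InnerProductSpace ℝ Y] (hM0 : ∀ x, M0 ≤ ‖S x - z‖)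
    (hM0nn : 0 ≤ M0) (hG0 : ∀ x, 0 ≤ G x) {α : ℕ → ℝ} (hα0 : ∀ i, 0 < α i)
    (hα : Tendsto α atTop (𝓝 0)) {u : ℕ → X} {l : X} (hSu : WeakTendsto (fun i => S (u i)) (S l))
    (hGu : G l ≤ liminf (fun i => G (u i)) atTop) :
    (if ‖S l - z‖ = M0 then (0 : EReal) else ⊤) + G l ≤
      liminf (fun i => (((α i)⁻¹ * ((1/2) * ‖S (u i) - z‖^2 - M0^2/2) : ℝ) : EReal) + G (u i))
        atTop := by
  split_ifs with hl
  · refine (zero_add (G l)).trans_le (hGu.trans (liminf_le_liminf (Eventually.of_forall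
      fun i => le_add_of_nonneg_left (EReal.coe_nonneg.mpr ?_))))
    have := hM0 (u i)
    exact mul_nonneg (inv_nonneg.mpr (hα0 i).le) (by nlinarith)
  · obtain ⟨ρ, hM0ρ, hρ⟩ := exists_between ((hM0 l).lt_of_ne (Ne.symm hl))
    have hev := (hSu.sub_const z).eventually_lt_norm hρ
    rw [EReal.liminf_coe_add_eq_top (tendsto_inv_mul_atTop_of_eventually_ge hα0 hα
      (δ := ρ^2/2 - M0^2/2) (by nlinarith) (hev.mono fun i hi => by nlinarith)) fun i => hG0 _]
    exact le_top

lemma limsup_rescaled_const_le {l : X} (hG0 : 0 ≤ G l) (α : ℕ → ℝ) :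
    limsup (fun i => (((α i)⁻¹ * ((1/2) * ‖S l - z‖^2 - M0^2/2) : ℝ) : EReal) + G l) atTop ≤
      (if ‖S l - z‖ = M0 then (0 : EReal) else ⊤) + G l := by
  split_ifs with hl
  · simp [hl, show (2⁻¹ : ℝ) * M0^2 - M0^2/2 = 0 by ring]
  · rw [EReal.top_add_of_ne_bot (ne_bot_of_le_ne_bot EReal.zero_ne_bot hG0)]
    exact le_top

end GammaLimit

open Classical in
theorem gamma_convergence_vanishing_alpha_general
    {n m : ℕ}
    (Ω : Set (Vec n))
    {Y : Type*} [NormedAddCommGroup Y] [InnerProductSpace ℝ Y] (z : Y)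
    (M : Finset (Vec m))
    (c : Vec m → ℝ) (hc0 : ∀ v, 0 ≤ c v)
    (S : Lp (Vec m) 2 (volume.restrict Ω) → Y)
    (hS : ∀ (u : ℕ → Lp (Vec m) 2 (volume.restrict Ω)) (l : Lp (Vec m) 2 (volume.restrict Ω)),
      WeakTendsto u l → WeakTendsto (fun i => S (u i)) (S l))
    -- the `α`-dependent multibang penalty `g_α = (α c + δ_M)**`
    (gα : ℝ → Vec m → EReal)
    (hgα : ∀ a : ℝ, gα a = EConj (EConj (fun v =>
      if v ∈ (M : Set (Vec m)) then ((a * c v : ℝ) : EReal) else ⊤)))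
    -- the best approximation distance and set
    (M0 : ℝ) (hM0 : M0 = ⨅ u : Lp (Vec m) 2 (volume.restrict Ω), ‖S u - z‖)
    -- the Γ-limit functional `δ_O + G₁` with `g₁ = (c + δ_M)**`
    (Flim : Lp (Vec m) 2 (volume.restrict Ω) → EReal)
    (hFlim : ∀ u, Flim u =
      (if ‖S u - z‖ = M0 then (0 : EReal) else ⊤) +
        intG (volume.restrict Ω) (EConj (EConj (fun v =>
          if v ∈ (M : Set (Vec m)) then ((c v : ℝ) : EReal) else ⊤))) (fun x => u x))
    -- a sequence of control cost parameters tending to zero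
    (αs : ℕ → ℝ) (hαpos : ∀ i, 0 < αs i) (hαs : Tendsto αs atTop (nhds (0:ℝ))) :
    -- (i) Γ-liminf inequality
    (∀ (u : ℕ → Lp (Vec m) 2 (volume.restrict Ω)) (l), WeakTendsto u l →
      Flim l ≤ Filter.liminf (fun i => (((αs i)⁻¹ : ℝ) : EReal) *
        (energy (volume.restrict Ω) S z (gα (αs i)) (u i) - (((M0^2/2 : ℝ)) : EReal))) atTop)
    -- (ii) existence of recovery sequences
    ∧ (∀ l : Lp (Vec m) 2 (volume.restrict Ω), ∃ u : ℕ → Lp (Vec m) 2 (volume.restrict Ω),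
        WeakTendsto u l ∧
        Filter.limsup (fun i => (((αs i)⁻¹ : ℝ) : EReal) *
          (energy (volume.restrict Ω) S z (gα (αs i)) (u i) - (((M0^2/2 : ℝ)) : EReal))) atTop
          ≤ Flim l) := by
  set g := EConj (EConj fun v => if v ∈ (M : Set (Vec m)) then ((c v : ℝ) : EReal) else ⊤)
  have hg0 : ∀ v, 0 ≤ g v := econj_econj_nonneg fun v => by split_ifs <;> simp [hc0]
  have hgα_eq : ∀ i, gα (αs i) = fun v => (αs i : EReal) * g v := fun i => by
    funext v
    rw [hgα, ← econj_econj_const_mul (hαpos i)]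
    congr 2
    funext w
    split_ifs <;> simp [EReal.coe_mul, EReal.coe_mul_top_of_pos (hαpos i)]
  have hM0le : ∀ u, M0 ≤ ‖S u - z‖ := fun u => hM0 ▸ ciInf_le ⟨0, by
    rintro _ ⟨v, rfl⟩
    exact norm_nonneg _⟩ u
  have hM0nn : 0 ≤ M0 := hM0 ▸ Real.iInf_nonneg fun u => norm_nonneg _
  have hFlim' : ∀ u : Lp (Vec m) 2 (volume.restrict Ω),
      Flim u = (if ‖S u - z‖ = M0 then (0 : EReal) else ⊤) + intG (volume.restrict Ω) g u :=
    hFlim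
  simp only [hgα_eq, inv_mul_energy_const_mul_sub (hαpos _), hFlim']
  refine ⟨fun u l hul => ?_, fun l => ⟨fun _ => l, fun w => tendsto_const_nhds, ?_⟩⟩
  · have hG := intG_le_liminf_of_weakTendsto hg0 (lowerSemicontinuous_econj _)
      (econvexOn_econj _) hul
    exact indicator_add_le_liminf_rescaled
      (G := fun v : Lp (Vec m) 2 (volume.restrict Ω) => intG (volume.restrict Ω) g v)
      hM0le hM0nn (fun _ => intG_nonneg hg0 _) hαpos hαs (hS u l hul) hG
  · exact limsup_rescaled_const_le
      (G := fun v : Lp (Vec m) 2 (volume.restrict Ω) => intG (volume.restrict Ω) g v)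
      (intG_nonneg hg0 _) αs

open Classical in
/-- Γ-convergence for vanishing control cost `α → 0`: with
`g_α = (α c + δ_M)**`, `M₀ = inf_u ‖S u − z‖` and `O = {u : ‖S u − z‖ = M₀}`, if `S` is
weak-to-weak continuous then `(1/α)(E^z_α − M₀²/2)` Γ-converges, w.r.t. weak convergence
in `U`, to `δ_O + G₁` with `G₁(u) = ∫_Ω (c + δ_M)**(u(x)) dx`. -/
theorem gamma_convergence_vanishing_alpha
    {n m : ℕ} (hm : 2 ≤ m)
    (Ω : Set (Vec n)) (hΩopen : IsOpen Ω) (hΩbdd : Bornology.IsBounded Ω)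
    {Y : Type*} [NormedAddCommGroup Y] [InnerProductSpace ℝ Y] [CompleteSpace Y] (z : Y)
    (M : Finset (Vec m)) (hM : M.Nonempty)
    (c : Vec m → ℝ) (hc0 : ∀ v, 0 ≤ c v) (hcconv : StrictConvexOn ℝ Set.univ c)
    (hclsc : LowerSemicontinuous c)
    (S : Lp (Vec m) 2 (volume.restrict Ω) → Y)
    (hS : ∀ (u : ℕ → Lp (Vec m) 2 (volume.restrict Ω)) (l : Lp (Vec m) 2 (volume.restrict Ω)),
      WeakTendsto u l → WeakTendsto (fun i => S (u i)) (S l))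
    -- the `α`-dependent multibang penalty `g_α = (α c + δ_M)**`
    (gα : ℝ → Vec m → EReal)
    (hgα : ∀ a : ℝ, gα a = EConj (EConj (fun v =>
      if v ∈ (M : Set (Vec m)) then ((a * c v : ℝ) : EReal) else ⊤)))
    -- the best approximation distance and set
    (M0 : ℝ) (hM0 : M0 = ⨅ u : Lp (Vec m) 2 (volume.restrict Ω), ‖S u - z‖)
    -- the Γ-limit functional `δ_O + G₁` with `g₁ = (c + δ_M)**`
    (Flim : Lp (Vec m) 2 (volume.restrict Ω) → EReal)
    (hFlim : ∀ u, Flim u =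
      (if ‖S u - z‖ = M0 then (0 : EReal) else ⊤) +
        intG (volume.restrict Ω) (EConj (EConj (fun v =>
          if v ∈ (M : Set (Vec m)) then ((c v : ℝ) : EReal) else ⊤))) (fun x => u x))
    -- a sequence of control cost parameters tending to zero
    (αs : ℕ → ℝ) (hαpos : ∀ i, 0 < αs i) (hαs : Tendsto αs atTop (nhds (0:ℝ))) :
    -- (i) Γ-liminf inequality
    (∀ (u : ℕ → Lp (Vec m) 2 (volume.restrict Ω)) (l), WeakTendsto u l →
      Flim l ≤ Filter.liminf (fun i => (((αs i)⁻¹ : ℝ) : EReal) *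
        (energy (volume.restrict Ω) S z (gα (αs i)) (u i) - (((M0^2/2 : ℝ)) : EReal))) atTop)
    -- (ii) existence of recovery sequences
    ∧ (∀ l : Lp (Vec m) 2 (volume.restrict Ω), ∃ u : ℕ → Lp (Vec m) 2 (volume.restrict Ω),
        WeakTendsto u l ∧
        Filter.limsup (fun i => (((αs i)⁻¹ : ℝ) : EReal) *
          (energy (volume.restrict Ω) S z (gα (αs i)) (u i) - (((M0^2/2 : ℝ)) : EReal))) atTop
          ≤ Flim l) :=
  gamma_convergence_vanishing_alpha_general Ω z M c hc0 S hS gα hgα M0 hM0 Flim hFlim αs hαpos hαs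
end
end
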